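/- arXiv:2007.13915 — 7 statements merged into one kernel-verified Lean document; each statement's English description precedes it below -/
import Mathlib

section
/- Let $w_\delta$ be a $\mathbf{C}^1$ function on $[0,\delta]$ that is nonnegative, non-increasing, non-constant, and satisfies $\int_0^\delta w_\delta(s)\,ds = 1$. Define $\nu(\delta) = \int_0^\delta s\,w_\delta(s)\,ds$ and $b_\delta(k) = \frac{1}{\nu(\delta)}\int_0^\delta \sin(2\pi k s)\,w_\delta(s)\,ds$. Then for every integer $k \geq 1$, $2\pi k\, b_\delta(k) > 0$. -/
/-!
Integrating by parts against the antiderivative `(1 - cos (a s)) / a` of `sin (a s)`, which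
vanishes at `0`, gives
`a ∫₀^δ sin (a s) w(s) ds = (1 - cos (a δ)) w(δ) + ∫₀^δ (1 - cos (a s)) (-w'(s)) ds`.
Both terms are nonnegative, and the integral is positive: `-w' ≥ 0` has integral
`w(0) - w(δ) > 0`, so it is nonzero on a set of positive measure, while `1 - cos (a s)` vanishes
only on a countable set. The same support argument shows `ν(δ) = ∫₀^δ s w(s) ds > 0`.
-/

open Real Set MeasureTheory intervalIntegral
open scoped Interval

theorem integral_mul_pos_of_ae_pos {a b : ℝ} {f g : ℝ → ℝ} (hab : a ≤ b)
    (hg : ∀ᵐ s, s ∈ Ioc a b → 0 < g s) (hf : ∀ s ∈ Ioc a b, 0 ≤ f s)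
    (hgf : IntervalIntegrable (fun s ↦ g s * f s) volume a b)
    (hfi : IntervalIntegrable f volume a b) (h : 0 < ∫ s in a..b, f s) :
    0 < ∫ s in a..b, g s * f s := by
  have hf_ae : 0 ≤ᵐ[volume.restrict (Ι a b)] f := by
    rw [uIoc_of_le hab]
    exact (ae_restrict_iff' measurableSet_Ioc).2 (ae_of_all _ hf)
  have hgf_ae : 0 ≤ᵐ[volume.restrict (Ι a b)] fun s ↦ g s * f s := by
    rw [uIoc_of_le hab]
    refine (ae_restrict_iff' measurableSet_Ioc).2 ?_
    filter_upwards [hg] with s hs hsI using mul_nonneg (hs hsI).le (hf s hsI)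
  rw [integral_pos_iff_support_of_nonneg_ae' hf_ae hfi] at h
  rw [integral_pos_iff_support_of_nonneg_ae' hgf_ae hgf]
  refine ⟨h.1, h.2.trans_le (measure_mono_ae ?_)⟩
  filter_upwards [hg] with s hs ⟨hfs, hsI⟩
  exact ⟨mul_ne_zero (hs hsI).ne' hfs, hsI⟩

theorem ae_cos_mul_ne_one {a : ℝ} (ha : a ≠ 0) : ∀ᵐ s : ℝ, cos (a * s) ≠ 1 := by
  have hsub : {s : ℝ | cos (a * s) = 1} ⊆ range fun n : ℤ ↦ n * (2 * π) / a := by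
    intro s hs
    obtain ⟨n, hn⟩ := (cos_eq_one_iff _).1 hs
    exact ⟨n, by simp only [hn, mul_div_cancel_left₀ _ ha]⟩
  rw [ae_iff]
  simpa only [not_not] using ((countable_range _).mono hsub).measure_zero volume

theorem mul_integral_sin_mul_eq {a δ : ℝ} {w w' : ℝ → ℝ} (ha : a ≠ 0) (hδ : 0 ≤ δ)
    (hw : ContinuousOn w (Icc 0 δ)) (hderiv : ∀ x ∈ Ioo 0 δ, HasDerivAt w (w' x) x)
    (hw' : IntervalIntegrable w' volume 0 δ) :
    a * ∫ s in 0..δ, sin (a * s) * w s =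
      (1 - cos (a * δ)) * w δ + ∫ s in 0..δ, (1 - cos (a * s)) * -w' s := by
  have hv : ∀ x, HasDerivAt (fun s ↦ (1 - cos (a * s)) / a) (sin (a * x)) x := by
    intro x
    refine ((((hasDerivAt_id' x).const_mul a).cos.const_sub 1).div_const a).congr_deriv ?_
    field_simp
  have hibp := integral_mul_deriv_eq_deriv_mul_of_hasDerivAt (a := 0) (b := δ)
    (by rwa [uIcc_of_le hδ]) (by fun_prop)
    (by simpa only [min_eq_left hδ, max_eq_right hδ] using hderiv) (fun x _ ↦ hv x) hw'
    ((by fun_prop : Continuous fun s ↦ sin (a * s)).intervalIntegrable _ _)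
  have hrest : ∫ s in 0..δ, (1 - cos (a * s)) * -w' s =
      -(a * ∫ s in 0..δ, w' s * ((1 - cos (a * s)) / a)) := by
    rw [← intervalIntegral.integral_const_mul, ← intervalIntegral.integral_neg]
    congr 1 with s
    field_simp
  simp_rw [mul_comm (sin _)]
  rw [hibp, hrest, mul_zero, cos_zero]
  field_simp
  ring

theorem integral_sin_mul_pos_of_antitoneOn {a δ : ℝ} {w : ℝ → ℝ} (ha : 0 < a) (hδ : 0 < δ)
    (hw : ContDiffOn ℝ 1 w (Icc 0 δ)) (hwδ : 0 ≤ w δ) (hmono : AntitoneOn w (Icc 0 δ))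
    (hnc : w δ < w 0) :
    0 < ∫ s in 0..δ, sin (a * s) * w s := by
  set w' := derivWithin w (Icc 0 δ)
  have hw'i : IntervalIntegrable w' volume 0 δ :=
    (hw.continuousOn_derivWithin (uniqueDiffOn_Icc hδ) le_rfl).intervalIntegrable_of_Icc hδ.le
  have hderiv : ∀ x ∈ Ioo 0 δ, HasDerivAt w (w' x) x := fun x hx ↦
    ((hw.differentiableOn one_ne_zero x (Ioo_subset_Icc_self hx)).hasDerivWithinAt).hasDerivAt
      (Icc_mem_nhds hx.1 hx.2)
  have hftc : ∫ s in 0..δ, -w' s = w 0 - w δ := by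
    rw [intervalIntegral.integral_neg, integral_eq_sub_of_hasDerivAt_of_le hδ.le hw.continuousOn hderiv hw'i]
    ring
  have hcos_pos : ∀ᵐ s, s ∈ Ioc 0 δ → 0 < 1 - cos (a * s) := by
    filter_upwards [ae_cos_mul_ne_one ha.ne'] with s hs _
    exact sub_pos.2 ((cos_le_one _).lt_of_ne hs)
  have hJ : 0 < ∫ s in 0..δ, (1 - cos (a * s)) * -w' s :=
    integral_mul_pos_of_ae_pos hδ.le hcos_pos (fun _ _ ↦ neg_nonneg.2 hmono.derivWithin_nonpos)
      (hw'i.neg.continuousOn_mul (by fun_prop)) hw'i.neg (by rw [hftc]; linarith)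
  have hI := mul_integral_sin_mul_eq ha.ne' hδ.le hw.continuousOn hderiv hw'i
  have hboundary : 0 ≤ (1 - cos (a * δ)) * w δ := mul_nonneg (sub_nonneg.2 (cos_le_one _)) hwδ
  exact pos_of_mul_pos_right (hI ▸ add_pos_of_nonneg_of_pos hboundary hJ) ha.le

theorem stmt0 (δ : ℝ) (hδ : 0 < δ) (w : ℝ → ℝ)
    (hw : ContDiffOn ℝ 1 w (Icc 0 δ))
    (hpos : ∀ s ∈ Icc 0 δ, 0 ≤ w s)
    (hmono : AntitoneOn w (Icc 0 δ))
    (hnc : w δ < w 0)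
    (hnorm : (∫ s in (0:ℝ)..δ, w s) = 1) :
    ∀ k : ℕ, 1 ≤ k →
      0 < 2 * π * k *
        ((1 / (∫ s in (0:ℝ)..δ, s * w s)) *
          ∫ s in (0:ℝ)..δ, Real.sin (2 * π * k * s) * w s) := by
  intro k hk
  have hk : (0 : ℝ) < k := by exact_mod_cast hk
  have hwi : IntervalIntegrable w volume 0 δ := hw.continuousOn.intervalIntegrable_of_Icc hδ.le
  have hν : 0 < ∫ s in (0:ℝ)..δ, s * w s :=
    integral_mul_pos_of_ae_pos hδ.le (ae_of_all _ fun _ hs ↦ hs.1)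
      (fun s hs ↦ hpos s (Ioc_subset_Icc_self hs)) (hwi.continuousOn_mul continuousOn_id) hwi
      (hnorm ▸ one_pos)
  have hb := integral_sin_mul_pos_of_antitoneOn (by positivity : 0 < 2 * π * k) hδ hw
    (hpos δ (right_mem_Icc.2 hδ.le)) hmono hnc
  exact mul_pos (by positivity) (mul_pos (one_div_pos.2 hν) hb)
end

section
/- Let $w_\delta$ be a $\mathbf{C}^1$ function on $[0,\delta]$ that is nonnegative, non-increasing, non-constant, with $\int_0^\delta w_\delta = 1$, and let $b_\delta(k) = \frac{1}{\nu(\delta)}\int_0^\delta \sin(2\pi k s) w_\delta(s)\,ds$ where $\nu(\delta) = \int_0^\delta s\,w_\delta(s)\,ds$. Then $\liminf_{k\to\infty} 2\pi k\, b_\delta(k) \geq \frac{1}{\nu(\delta)}\left[w_\delta(0) - w_\delta(\delta)\right] > 0$. -/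
/-!
Integrating by parts,
`2πk ∫₀^δ sin(2πks) w(s) ds = w(0) - cos(2πkδ) w(δ) + ∫₀^δ cos(2πks) w'(s) ds`.
As `w(δ) ≥ 0`, the right-hand side is at least `w(0) - w(δ) + ∫₀^δ cos(2πks) w'(s) ds`, whose last
term tends to `0` by the Riemann–Lebesgue lemma since `w'` is continuous. Finally `ν > 0` because
`s w(s)` and `w(s)` have the same support in `(0, δ]`.
-/

open Real Set MeasureTheory intervalIntegral Filter
open scoped Topology Interval FourierTransform

theorem tendsto_integral_cos_mul_cocompact {v : ℝ → ℝ} (hv : Integrable v) :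
    Tendsto (fun t : ℝ => ∫ s, cos (2 * π * t * s) * v s) (cocompact ℝ) (𝓝 0) := by
  have hre : ∀ t s : ℝ, (𝐞 (-(s * t)) • (v s : ℂ)).re = cos (2 * π * t * s) * v s := by
    intro t s
    rw [Circle.smul_def, Real.fourierChar_apply, smul_eq_mul, Complex.re_mul_ofReal,
      Complex.exp_ofReal_mul_I_re, mul_neg, cos_neg]
    ring_nf
  have hRL := (Complex.continuous_re.tendsto 0).comp
    (Real.tendsto_integral_exp_smul_cocompact fun s => (v s : ℂ))
  rw [Function.comp_def, Complex.zero_re] at hRL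
  refine hRL.congr fun t => ?_
  have hint : Integrable fun s => 𝐞 (-(s * t)) • (v s : ℂ) := by
    simpa [mul_comm] using (Real.fourierIntegral_convergent_iff t).2 hv.ofReal
  rw [← RCLike.re_to_complex, ← integral_re hint]
  simp only [RCLike.re_to_complex, hre]

theorem tendsto_intervalIntegral_cos_mul_cocompact {v : ℝ → ℝ} {a b : ℝ}
    (hv : IntervalIntegrable v volume a b) :
    Tendsto (fun t : ℝ => ∫ s in a..b, cos (2 * π * t * s) * v s) (cocompact ℝ) (𝓝 0) := by
  have hv' : Integrable ((Ι a b).indicator v) :=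
    (integrable_indicator_iff measurableSet_uIoc).2 hv.def'
  simpa only [intervalIntegral_eq_integral_uIoc, indicator_mul_right, smul_zero,
    ← MeasureTheory.integral_indicator measurableSet_uIoc] using
    (tendsto_integral_cos_mul_cocompact hv').const_smul (if a ≤ b then (1 : ℝ) else -1)

theorem intervalIntegral.integral_id_mul_pos {f : ℝ → ℝ} {a b : ℝ} (ha : 0 ≤ a) (hab : a ≤ b)
    (hf : ∀ s ∈ Ioc a b, 0 ≤ f s) (hfi : IntervalIntegrable f volume a b)
    (h : 0 < ∫ s in a..b, f s) : 0 < ∫ s in a..b, s * f s := by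
  have hnonneg {g : ℝ → ℝ} (hg : ∀ s ∈ Ioc a b, 0 ≤ g s) : 0 ≤ᵐ[volume.restrict (Ι a b)] g := by
    rw [uIoc_of_le hab]
    exact ae_restrict_of_forall_mem measurableSet_Ioc hg
  have hsupport :
      (Function.support fun s => s * f s) ∩ Ioc a b = Function.support f ∩ Ioc a b := by
    ext s
    simp +contextual [and_congr_left_iff, fun hs : a < s => (ha.trans_lt hs).ne']
  rw [integral_pos_iff_support_of_nonneg_ae' (hnonneg hf) hfi] at h
  rw [integral_pos_iff_support_of_nonneg_ae'
    (hnonneg fun s hs => mul_nonneg (ha.trans hs.1.le) (hf s hs))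
    (hfi.continuousOn_mul continuousOn_id), hsupport]
  exact h

theorem integral_sin_mul_eq_of_contDiffOn {w : ℝ → ℝ} {a b : ℝ} (hab : a < b)
    (hw : ContDiffOn ℝ 1 w (Icc a b)) (c : ℝ) :
    c * ∫ s in a..b, sin (c * s) * w s =
      cos (c * a) * w a - cos (c * b) * w b +
        ∫ s in a..b, cos (c * s) * derivWithin w (Icc a b) s := by
  have hw' : ∀ s ∈ [[a, b]], HasDerivWithinAt w (derivWithin w (Icc a b) s) [[a, b]] s := by
    rw [uIcc_of_le hab.le]
    exact fun s hs => (hw.differentiableOn one_ne_zero s hs).hasDerivWithinAt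
  have hv : ∀ s ∈ [[a, b]],
      HasDerivWithinAt (fun s => -cos (c * s)) (c * sin (c * s)) [[a, b]] s := by
    intro s _
    exact (by simpa [mul_comm] using ((hasDerivAt_id s).const_mul c).cos.fun_neg :
      HasDerivAt (fun s => -cos (c * s)) (c * sin (c * s)) s).hasDerivWithinAt
  have hw'i : IntervalIntegrable (derivWithin w (Icc a b)) volume a b :=
    (hw.continuousOn_derivWithin (uniqueDiffOn_Icc hab) le_rfl).intervalIntegrable_of_Icc hab.le
  have hibp := integral_mul_deriv_eq_deriv_mul_of_hasDerivWithinAt hw' hv hw'i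
    ((by fun_prop : Continuous fun s => c * sin (c * s)).intervalIntegrable a b)
  have hsin : ∫ s in a..b, w s * (c * sin (c * s)) = c * ∫ s in a..b, sin (c * s) * w s := by
    rw [← intervalIntegral.integral_const_mul]
    exact integral_congr fun s _ => by ring
  have hcos : ∫ s in a..b, derivWithin w (Icc a b) s * -cos (c * s) =
      -∫ s in a..b, cos (c * s) * derivWithin w (Icc a b) s := by
    rw [← intervalIntegral.integral_neg]
    exact integral_congr fun s _ => by ring
  rw [hsin, hcos] at hibp
  linarith

theorem le_liminf_of_tendsto_of_le_of_le_add {ι : Type*} {l : Filter ι} [l.NeBot] {f g : ι → ℝ}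
    {L M : ℝ} (hg : Tendsto g l (𝓝 L)) (hgf : ∀ i, g i ≤ f i) (hfg : ∀ i, f i ≤ g i + M) :
    L ≤ liminf f l :=
  hg.liminf_eq ▸ liminf_le_liminf (.of_forall hgf) hg.isBoundedUnder_ge
    ((hg.add_const M).isBoundedUnder_le.mono_le (.of_forall hfg)).isCoboundedUnder_ge

theorem stmt1_general (δ : ℝ) (hδ : 0 < δ) (w : ℝ → ℝ)
    (hw : ContDiffOn ℝ 1 w (Icc 0 δ))
    (hpos : ∀ s ∈ Icc 0 δ, 0 ≤ w s)
    (hnc : w δ < w 0)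
    (hnorm : (∫ s in (0:ℝ)..δ, w s) = 1)
    (ν : ℝ) (hν : ν = ∫ s in (0:ℝ)..δ, s * w s) :
    ((w 0 - w δ) / ν ≤
      Filter.liminf (fun k : ℕ =>
        2 * π * k * ((1 / ν) * ∫ s in (0:ℝ)..δ, Real.sin (2 * π * k * s) * w s)) atTop)
    ∧ 0 < (w 0 - w δ) / ν := by
  have hν_pos : 0 < ν := hν ▸ intervalIntegral.integral_id_mul_pos le_rfl hδ.le
    (fun s hs => hpos s (Ioc_subset_Icc_self hs))
    (hw.continuousOn.intervalIntegrable_of_Icc hδ.le) (hnorm ▸ one_pos)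
  refine ⟨?_, div_pos (sub_pos.2 hnc) hν_pos⟩
  set c : ℕ → ℝ := fun k => ∫ s in (0:ℝ)..δ, cos (2 * π * k * s) * derivWithin w (Icc 0 δ) s
  have hc : Tendsto c atTop (𝓝 0) :=
    (tendsto_intervalIntegral_cos_mul_cocompact
      ((hw.continuousOn_derivWithin (uniqueDiffOn_Icc hδ) le_rfl).intervalIntegrable_of_Icc
        hδ.le)).comp (tendsto_natCast_atTop_atTop.mono_right atTop_le_cocompact)
  have hibp : ∀ k : ℕ, 2 * π * k * ((1 / ν) * ∫ s in (0:ℝ)..δ, sin (2 * π * k * s) * w s) =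
      (w 0 - w δ + c k) / ν + w δ * (1 - cos (2 * π * k * δ)) / ν := by
    intro k
    have := integral_sin_mul_eq_of_contDiffOn hδ hw (2 * π * k)
    rw [mul_zero, cos_zero, one_mul] at this
    rw [one_div_mul_eq_div, ← mul_div_assoc, this]
    ring
  have hwδ : 0 ≤ w δ := hpos δ (right_mem_Icc.2 hδ.le)
  refine le_liminf_of_tendsto_of_le_of_le_add (M := 2 * w δ / ν)
    (by simpa using (hc.const_add (w 0 - w δ)).div_const ν) (fun k => ?_) (fun k => ?_)
  all_goals rw [hibp]
  · exact le_add_of_nonneg_right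
      (div_nonneg (mul_nonneg hwδ (sub_nonneg.2 (cos_le_one _))) hν_pos.le)
  · have : w δ * (1 - cos (2 * π * k * δ)) ≤ 2 * w δ := by
      nlinarith [neg_one_le_cos (2 * π * k * δ)]
    exact add_le_add_right (div_le_div_of_nonneg_right this hν_pos.le) _

theorem stmt1 (δ : ℝ) (hδ : 0 < δ) (w : ℝ → ℝ)
    (hw : ContDiffOn ℝ 1 w (Icc 0 δ))
    (hpos : ∀ s ∈ Icc 0 δ, 0 ≤ w s)
    (hmono : AntitoneOn w (Icc 0 δ))
    (hnc : w δ < w 0)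
    (hnorm : (∫ s in (0:ℝ)..δ, w s) = 1)
    (ν : ℝ) (hν : ν = ∫ s in (0:ℝ)..δ, s * w s) :
    ((w 0 - w δ) / ν ≤
      Filter.liminf (fun k : ℕ =>
        2 * π * k * ((1 / ν) * ∫ s in (0:ℝ)..δ, Real.sin (2 * π * k * s) * w s)) atTop)
    ∧ 0 < (w 0 - w δ) / ν :=
  stmt1_general δ hδ w hw hpos hnc hnorm ν hν
end

section
/- Under the assumptions of the preceding statements (kernel $w_\delta$ is $\mathbf{C}^1$, nonnegative, non-increasing, non-constant on $[0,\delta]$, integrating to 1), the infimum $\alpha := \inf_{k \geq 1} 2\pi k\, b_\delta(k)$ is strictly positive, where $b_\delta(k) = \frac{1}{\nu(\delta)}\int_0^\delta \sin(2\pi k s) w_\delta(s)\,ds$ and $\nu(\delta) = \int_0^\delta s\, w_\delta(s)\,ds$. -/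
open Real Set MeasureTheory intervalIntegral Filter Topology

/-!
Integrating by parts against the antiderivative `(1 - cos (L s)) / L` of `sin (L s)` gives
`L ∫₀^δ sin (L s) w s = (1 - cos (L δ)) w δ + ∫₀^δ (cos (L s) - 1) w' s`, a sum of nonnegative
terms because `w' ≤ 0`. As `w` is not constant, `w' ≤ -m < 0` on some interval `[c, d]`, so
the right side is at least `m ∫_c^d (1 - cos (L s)) ds ≥ m (d - c - 2 / L)`. This integral is
positive for every `L > 0`, and the bound is at least `m (d - c) / 2` once `L = 2πk` is large:
positivity for the finitely many small `k` and a uniform bound in the tail make the infimum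
positive.
-/

section Trigonometric

variable {a b L : ℝ}

theorem integral_one_sub_cos_mul (hL : L ≠ 0) :
    ∫ x in a..b, (1 - cos (L * x)) = b - a - (sin (L * b) - sin (L * a)) / L := by
  rw [intervalIntegral.integral_sub intervalIntegrable_const
      ((by fun_prop : Continuous fun x => cos (L * x)).intervalIntegrable a b),
    integral_comp_mul_left (fun x => cos x) hL, integral_cos]
  simp only [intervalIntegral.integral_const, smul_eq_mul, mul_one]
  field_simp

theorem integral_one_sub_cos_mul_pos (hL : 0 < L) (hab : a < b) :
    0 < ∫ x in a..b, (1 - cos (L * x)) := by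
  set t := (L * b - L * a) / 2 with ht_def
  have ht : 0 < t := by rw [ht_def, ← mul_sub]; have := sub_pos.2 hab; positivity
  have hsin : |sin t| < t := by simpa [abs_of_pos ht] using abs_sin_lt_abs ht.ne'
  have hdiff : sin (L * b) - sin (L * a) ≤ 2 * |sin t| := by
    rw [sin_sub_sin, mul_assoc]
    gcongr
    exact (le_abs_self _).trans <| by
      rw [abs_mul]; exact mul_le_of_le_one_right (abs_nonneg _) (abs_cos_le_one _)
  rw [integral_one_sub_cos_mul hL.ne', sub_pos, div_lt_iff₀ hL]
  linarith [show (b - a) * L = 2 * t by rw [ht_def]; ring]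

theorem sub_sub_two_div_le_integral_one_sub_cos_mul (hL : 0 < L) :
    b - a - 2 / L ≤ ∫ x in a..b, (1 - cos (L * x)) := by
  rw [integral_one_sub_cos_mul hL.ne']
  gcongr
  linarith [sin_le_one (L * b), neg_one_le_sin (L * a)]

end Trigonometric

section SineTransform

variable {w w' : ℝ → ℝ} {b L : ℝ}

theorem mul_integral_sin_mul_eq_s2 (hL : L ≠ 0)
    (hw : ∀ x ∈ uIcc 0 b, HasDerivWithinAt w (w' x) (uIcc 0 b) x)
    (hw' : IntervalIntegrable w' volume 0 b) :
    L * ∫ x in 0..b, sin (L * x) * w x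
      = (1 - cos (L * b)) * w b + ∫ x in 0..b, (cos (L * x) - 1) * w' x := by
  have hv : ∀ x, HasDerivAt (fun x => (1 - cos (L * x)) / L) (sin (L * x)) x := fun x => by
    refine ((((hasDerivAt_id x).const_mul L).cos.const_sub 1).div_const L).congr_deriv ?_
    simp [hL]
  have ibp := integral_mul_deriv_eq_deriv_mul_of_hasDerivWithinAt hw
    (fun x _ => (hv x).hasDerivWithinAt) hw'
    ((by fun_prop : Continuous fun x => sin (L * x)).intervalIntegrable 0 b)
  simp only [mul_zero, cos_zero, sub_self, zero_div, sub_zero] at ibp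
  rw [integral_congr (g := fun x => w x * sin (L * x)) (fun x _ => mul_comm _ _), ibp,
    mul_sub, ← intervalIntegral.integral_const_mul, sub_eq_add_neg, ← intervalIntegral.integral_neg]
  congr 1
  · field_simp
  · refine integral_congr fun x _ => ?_
    field_simp
    ring

variable {c d m : ℝ}

theorem mul_integral_one_sub_cos_le (hL : L ≠ 0)
    (hw : ∀ x ∈ uIcc 0 b, HasDerivWithinAt w (w' x) (uIcc 0 b) x)
    (hw' : IntervalIntegrable w' volume 0 b) (hw'_nonpos : ∀ x ∈ Icc 0 b, w' x ≤ 0)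
    (hc : 0 ≤ c) (hcd : c ≤ d) (hdb : d ≤ b) (hm : ∀ x ∈ Icc c d, w' x ≤ -m) (hwb : 0 ≤ w b) :
    m * ∫ x in c..d, (1 - cos (L * x)) ≤ L * ∫ x in 0..b, sin (L * x) * w x := by
  have hint : IntervalIntegrable (fun x => (cos (L * x) - 1) * w' x) volume 0 b :=
    hw'.continuousOn_mul (by fun_prop)
  have hsub : uIcc c d ⊆ uIcc 0 b := by
    rw [uIcc_of_le hcd, uIcc_of_le (hc.trans (hcd.trans hdb))]
    exact Icc_subset_Icc hc hdb
  rw [mul_integral_sin_mul_eq_s2 hL hw hw', ← intervalIntegral.integral_const_mul]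
  calc ∫ x in c..d, m * (1 - cos (L * x))
      ≤ ∫ x in c..d, (cos (L * x) - 1) * w' x := by
        refine integral_mono_on hcd
          ((by fun_prop : Continuous fun x => m * (1 - cos (L * x))).intervalIntegrable c d)
          (hint.mono_set hsub) fun x hx => ?_
        nlinarith [hm x hx, cos_le_one (L * x)]
    _ ≤ ∫ x in 0..b, (cos (L * x) - 1) * w' x := by
        refine integral_mono_interval hc hcd hdb ?_ hint
        refine (ae_restrict_iff' measurableSet_Ioc).2 (ae_of_all _ fun x hx => ?_)
        exact mul_nonneg_of_nonpos_of_nonpos (by linarith [cos_le_one (L * x)])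
          (hw'_nonpos x (Ioc_subset_Icc_self hx))
    _ ≤ _ := le_add_of_nonneg_left (mul_nonneg (by linarith [cos_le_one (L * b)]) hwb)

end SineTransform

theorem exists_Icc_deriv_le_neg_of_lt {w w' : ℝ → ℝ} {a b : ℝ} (hab : a < b)
    (hwc : ContinuousOn w (Icc a b)) (hw : ∀ x ∈ Ioo a b, HasDerivAt w (w' x) x)
    (hw'c : ContinuousOn w' (Ioo a b)) (hlt : w b < w a) :
    ∃ c d m, a < c ∧ c < d ∧ d < b ∧ 0 < m ∧ ∀ x ∈ Icc c d, w' x ≤ -m := by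
  obtain ⟨x₀, hx₀, hslope⟩ := exists_hasDerivAt_eq_slope w w' hab hwc hw
  have hneg : w' x₀ < 0 := by
    rw [hslope]; exact div_neg_of_neg_of_pos (sub_neg.2 hlt) (sub_pos.2 hab)
  have hev : ∀ᶠ x in 𝓝 x₀, w' x < w' x₀ / 2 ∧ x ∈ Ioo a b :=
    ((hw'c.continuousAt (isOpen_Ioo.mem_nhds hx₀)).eventually_lt_const (by linarith)).and
      (isOpen_Ioo.mem_nhds hx₀)
  obtain ⟨ε, hε, hball⟩ := Metric.eventually_nhds_iff_ball.1 hev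
  have hIcc : Icc (x₀ - ε / 2) (x₀ + ε / 2) ⊆ Metric.ball x₀ ε := by
    rw [← Real.closedBall_eq_Icc]; exact Metric.closedBall_subset_ball (by linarith)
  have hleft := (hball _ (hIcc (left_mem_Icc.2 (by linarith)))).2
  have hright := (hball _ (hIcc (right_mem_Icc.2 (by linarith)))).2
  exact ⟨x₀ - ε / 2, x₀ + ε / 2, -w' x₀ / 2, hleft.1, by linarith, hright.2, by linarith,
    fun x hx => by linarith [(hball x (hIcc hx)).1]⟩

theorem integral_id_mul_pos {w : ℝ → ℝ} {b : ℝ} (hb : 0 < b) (hwc : ContinuousOn w (Icc 0 b))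
    (hw_nonneg : ∀ s ∈ Icc 0 b, 0 ≤ w s) (hw0 : 0 < w 0) :
    0 < ∫ s in 0..b, s * w s := by
  have hev : ∀ᶠ s in 𝓝[>] 0, 0 < w s := by
    have := (hwc 0 (left_mem_Icc.2 hb.le)).eventually_const_lt hw0
    rw [nhdsWithin_Icc_eq_nhdsGE hb] at this
    exact this.filter_mono (nhdsWithin_mono _ Ioi_subset_Ici_self)
  obtain ⟨s, hs, hws⟩ := (hev.and (Ioo_mem_nhdsGT hb)).exists
  exact integral_pos hb (continuousOn_id.mul hwc)
    (fun x hx => mul_nonneg hx.1.le (hw_nonneg x (Ioc_subset_Icc_self hx)))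
    ⟨s, Ioo_subset_Icc_self hws, mul_pos hws.1 hs⟩

theorem sInf_pos_of_forall_pos_of_eventually_le {f : ℕ → ℝ} (hpos : ∀ k, 1 ≤ k → 0 < f k)
    {c : ℝ} (hc : 0 < c) (hev : ∀ᶠ k in atTop, c ≤ f k) :
    0 < sInf {x : ℝ | ∃ k : ℕ, 1 ≤ k ∧ x = f k} := by
  obtain ⟨N, hN⟩ := eventually_atTop.1 (hev.and (eventually_ge_atTop 1))
  have hne : (Finset.Icc 1 N).Nonempty := ⟨N, Finset.mem_Icc.2 ⟨(hN N le_rfl).2, le_rfl⟩⟩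
  have hmin : 0 < min c ((Finset.Icc 1 N).inf' hne f) :=
    lt_min hc ((Finset.lt_inf'_iff hne).2 fun k hk => hpos k (Finset.mem_Icc.1 hk).1)
  refine hmin.trans_le (le_csInf ⟨f N, N, (hN N le_rfl).2, rfl⟩ ?_)
  rintro x ⟨k, hk, rfl⟩
  rcases le_total k N with hkN | hNk
  · exact (min_le_right _ _).trans (Finset.inf'_le f (Finset.mem_Icc.2 ⟨hk, hkN⟩))
  · exact (min_le_left _ _).trans (hN k hNk).1

theorem AntitoneOn.exists_mul_integral_one_sub_cos_le {w : ℝ → ℝ} {b : ℝ} (hb : 0 < b)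
    (hw : ContDiffOn ℝ 1 w (Icc 0 b)) (hmono : AntitoneOn w (Icc 0 b)) (hlt : w b < w 0)
    (hwb : 0 ≤ w b) :
    ∃ c d m, c < d ∧ 0 < m ∧ ∀ L ≠ 0,
      m * ∫ x in c..d, (1 - cos (L * x)) ≤ L * ∫ x in 0..b, sin (L * x) * w x := by
  set w' := derivWithin w (Icc 0 b)
  have hderiv : ∀ x ∈ Icc 0 b, HasDerivWithinAt w (w' x) (Icc 0 b) x :=
    fun x hx => (hw.differentiableOn one_ne_zero x hx).hasDerivWithinAt
  have hw'c : ContinuousOn w' (Icc 0 b) := hw.continuousOn_derivWithin (uniqueDiffOn_Icc hb) le_rfl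
  obtain ⟨c, d, m, hc, hcd, hd, hm, hw'm⟩ := exists_Icc_deriv_le_neg_of_lt hb hw.continuousOn
    (fun x hx => (hderiv x (Ioo_subset_Icc_self hx)).hasDerivAt (Icc_mem_nhds hx.1 hx.2))
    (hw'c.mono Ioo_subset_Icc_self) hlt
  refine ⟨c, d, m, hcd, hm, fun L hL => ?_⟩
  rw [← uIcc_of_le hb.le] at hderiv hw'c
  exact mul_integral_one_sub_cos_le hL hderiv hw'c.intervalIntegrable
    (fun x _ => hmono.derivWithin_nonpos) hc.le hcd.le hd.le hw'm hwb

theorem stmt2_general (δ : ℝ) (hδ : 0 < δ) (w : ℝ → ℝ)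
    (hw : ContDiffOn ℝ 1 w (Icc 0 δ))
    (hpos : ∀ s ∈ Icc 0 δ, 0 ≤ w s)
    (hmono : AntitoneOn w (Icc 0 δ))
    (hnc : w δ < w 0)
    (ν : ℝ) (hν : ν = ∫ s in (0:ℝ)..δ, s * w s) :
    0 < sInf {x : ℝ | ∃ k : ℕ, 1 ≤ k ∧
      x = 2 * π * k * ((1 / ν) * ∫ s in (0:ℝ)..δ, Real.sin (2 * π * k * s) * w s)} := by
  have hwδ : 0 ≤ w δ := hpos δ (right_mem_Icc.2 hδ.le)
  obtain ⟨c, d, m, hcd, hm, hbound⟩ := hmono.exists_mul_integral_one_sub_cos_le hδ hw hnc hwδ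
  have hν0 : 0 < ν := hν ▸ integral_id_mul_pos hδ hw.continuousOn hpos (hwδ.trans_lt hnc)
  have hL : ∀ k : ℕ, 1 ≤ k → 0 < 2 * π * k := fun k hk => by
    have : (0 : ℝ) < k := by exact_mod_cast hk
    positivity
  have hlow : ∀ k : ℕ, 1 ≤ k → m / ν * ∫ x in c..d, (1 - cos (2 * π * k * x)) ≤
      2 * π * k * ((1 / ν) * ∫ s in (0:ℝ)..δ, Real.sin (2 * π * k * s) * w s) := fun k hk => by
    have := mul_le_mul_of_nonneg_left (hbound _ (hL k hk).ne') (one_div_pos.2 hν0).le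
    exact (le_of_eq (by ring)).trans (this.trans_eq (by ring))
  have htail : Tendsto (fun k : ℕ => 2 / (2 * π * k)) atTop (𝓝 0) :=
    tendsto_const_nhds.div_atTop (tendsto_natCast_atTop_atTop.const_mul_atTop (by positivity))
  refine sInf_pos_of_forall_pos_of_eventually_le (fun k hk => ?_)
    (by have := sub_pos.2 hcd; positivity : 0 < m / ν * ((d - c) / 2)) ?_
  · exact (mul_pos (div_pos hm hν0) (integral_one_sub_cos_mul_pos (hL k hk) hcd)).trans_le
      (hlow k hk)
  · filter_upwards [htail.eventually (ge_mem_nhds (half_pos (sub_pos.2 hcd))),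
      eventually_ge_atTop 1] with k hsmall hk
    refine le_trans ?_ (hlow k hk)
    gcongr
    linarith [sub_sub_two_div_le_integral_one_sub_cos_mul (a := c) (b := d) (hL k hk)]

theorem stmt2 (δ : ℝ) (hδ : 0 < δ) (w : ℝ → ℝ)
    (hw : ContDiffOn ℝ 1 w (Icc 0 δ))
    (hpos : ∀ s ∈ Icc 0 δ, 0 ≤ w s)
    (hmono : AntitoneOn w (Icc 0 δ))
    (hnc : w δ < w 0)
    (hnorm : (∫ s in (0:ℝ)..δ, w s) = 1)
    (ν : ℝ) (hν : ν = ∫ s in (0:ℝ)..δ, s * w s) :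
    0 < sInf {x : ℝ | ∃ k : ℕ, 1 ≤ k ∧
      x = 2 * π * k * ((1 / ν) * ∫ s in (0:ℝ)..δ, Real.sin (2 * π * k * s) * w s)} :=
  stmt2_general δ hδ w hw hpos hmono hnc ν hν
end

section
/- Periodic Hardy–Littlewood rearrangement inequality: let $\rho : \mathbb{R} \to \mathbb{R}$ be continuous and 1-periodic, and let $f : \mathbb{R} \to \mathbb{R}$ be continuous and monotonically increasing. Then for every $s \in [0,1]$, $\int_0^1 f(\rho(x))\, \rho(x+s)\,dx \leq \int_0^1 f(\rho(x))\, \rho(x)\,dx$. -/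
open Real Set MeasureTheory intervalIntegral

/-!
Write `F s = ∫₀¹ f (ρ x) ρ (x + s) dx`. For a rational shift `s = k / N`, split the integral into
the `N` translates of `x` by `i / N`, all equal by periodicity. For fixed `x`, the values
`ρ (x + i / N)` form an `N`-periodic sequence, and shifting by `k` permutes them cyclically; since
`f ∘ ρ` and `ρ` monovary, the rearrangement inequality gives `N F (k / N) ≤ N F 0`. As `F` is
continuous, approximating `s` by `⌊s n⌋ / n` extends this to all `s ≥ 0`.
-/

open Finset Function Filter Topology

open Fin.NatCast in
theorem Function.Periodic.sum_range_mul_add_le {α : Type*} [Semiring α] [LinearOrder α]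
    [IsStrictOrderedRing α] [ExistsAddOfLE α] {f : α → α} (hf : Monotone f) {b : ℕ → α} {N : ℕ}
    (hb : Periodic b N) (k : ℕ) :
    ∑ i ∈ range N, f (b i) * b (i + k) ≤ ∑ i ∈ range N, f (b i) * b i := by
  obtain _ | N := N
  · simp
  set a : Fin (N + 1) → α := fun i => b i
  have hshift (i : Fin (N + 1)) : b (i + k) = a (i + k) := by
    simp [a, Fin.val_add, hb.map_mod_nat]
  have hrearr :
      ∑ i, f (a i) * a (Equiv.addRight (k : Fin (N + 1)) i) ≤ ∑ i, f (a i) * a i :=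
    ((monovary_self a).comp_monotone_left hf).sum_mul_comp_perm_le_sum_mul
  simpa [← Fin.sum_univ_eq_sum_range (fun i => f (b i) * b (i + k)), hshift,
    ← Fin.sum_univ_eq_sum_range (fun i => f (b i) * b i)] using hrearr

theorem Function.Periodic.intervalIntegral_comp_add_right {g : ℝ → ℝ} {T : ℝ}
    (hg : Periodic g T) (c : ℝ) : ∫ x in 0..T, g (x + c) = ∫ x in 0..T, g x := by
  simpa [integral_comp_add_right, add_comm] using hg.intervalIntegral_add_eq c 0

noncomputable def crossCorrelation (g h : ℝ → ℝ) (t : ℝ) : ℝ := ∫ x in 0..1, g x * h (x + t)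

theorem continuous_crossCorrelation {g h : ℝ → ℝ} (hg : Continuous g) (hh : Continuous h) :
    Continuous (crossCorrelation g h) := by
  unfold crossCorrelation
  fun_prop

theorem crossCorrelation_natCast_div_le {ρ f : ℝ → ℝ} (hρ : Continuous ρ) (hper : Periodic ρ 1)
    (hf : Continuous f) (hmono : Monotone f) (k N : ℕ) :
    crossCorrelation (f ∘ ρ) ρ (k / N) ≤ crossCorrelation (f ∘ ρ) ρ 0 := by
  obtain rfl | hN := N.eq_zero_or_pos
  · simp
  have hNR : (N : ℝ) ≠ 0 := Nat.cast_ne_zero.mpr hN.ne'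
  have hsum (t : ℝ) : ∑ i ∈ range N, ∫ x in 0..1, f (ρ (x + i / N)) * ρ (x + i / N + t) =
      N * crossCorrelation (f ∘ ρ) ρ t := by
    have hg : Periodic (fun x => f (ρ x) * ρ (x + t)) 1 := (hper.comp f).mul (hper.add_const t)
    simp [hg.intervalIntegral_comp_add_right, crossCorrelation]
  have hpointwise (x : ℝ) :
      ∑ i ∈ range N, f (ρ (x + i / N)) * ρ (x + i / N + k / N) ≤
        ∑ i ∈ range N, f (ρ (x + i / N)) * ρ (x + i / N + 0) := by
    have hb : Periodic (fun m : ℕ => ρ (x + m / N)) N := fun m => by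
      simp only [Nat.cast_add, add_div, div_self hNR, ← add_assoc, hper _]
    simpa [add_div, add_assoc] using hb.sum_range_mul_add_le hmono k
  have hint (t : ℝ) (i : ℕ) : IntervalIntegrable
      (fun x => f (ρ (x + i / N)) * ρ (x + i / N + t)) volume 0 1 :=
    Continuous.intervalIntegrable (by fun_prop) _ _
  refine le_of_mul_le_mul_left ?_ (Nat.cast_pos.mpr hN)
  rw [← hsum, ← hsum, ← intervalIntegral.integral_finsetSum fun i _ => hint _ i,
    ← intervalIntegral.integral_finsetSum fun i _ => hint _ i]
  exact integral_mono_on zero_le_one (Continuous.intervalIntegrable (by fun_prop) _ _)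
    (Continuous.intervalIntegrable (by fun_prop) _ _) fun x _ => hpointwise x

theorem stmt5 (ρ : ℝ → ℝ) (hρ : Continuous ρ) (hper : Function.Periodic ρ 1)
    (f : ℝ → ℝ) (hf : Continuous f) (hmono : Monotone f) :
    ∀ s ∈ Icc (0:ℝ) 1,
      (∫ x in (0:ℝ)..1, f (ρ x) * ρ (x + s)) ≤ ∫ x in (0:ℝ)..1, f (ρ x) * ρ x := by
  intro s hs
  have happrox : Tendsto (fun n : ℕ => (⌊s * n⌋₊ : ℝ) / n) atTop (𝓝 s) :=
    (tendsto_nat_floor_mul_div_atTop hs.1).comp tendsto_natCast_atTop_atTop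
  have hlim := ((continuous_crossCorrelation (hf.comp hρ) hρ).tendsto s).comp happrox
  calc _ = crossCorrelation (f ∘ ρ) ρ s := rfl
    _ ≤ crossCorrelation (f ∘ ρ) ρ 0 :=
      le_of_tendsto' hlim fun n => crossCorrelation_natCast_div_le hρ hper hf hmono _ n
    _ = _ := by simp [crossCorrelation]
end

section
/- Nonlinear nonlocal Poincaré-type inequality: let $w_\delta$ on $[0,\delta]$ ($0<\delta\leq 1$) be $\mathbf{C}^1$, nonnegative, non-increasing, with $\int_0^\delta w_\delta = 1$, and let $\rho : \mathbb{R} \to \mathbb{R}$ be $\mathbf{C}^1$, 1-periodic, with $\rho(x) \geq \rho_{\min} \geq 0$ for all $x$. Then $\int_0^1 \rho(x)\, \rho'(x)\, \mathcal{D}_x^\delta\rho(x)\,dx \geq \rho_{\min} \int_0^1 \rho'(x)\, \mathcal{D}_x^\delta\rho(x)\,dx$, where $\mathcal{D}_x^\delta\rho(x) = \frac{1}{\nu(\delta)}\int_0^\delta [\rho(x+s) - \rho(x)]\, w_\delta(s)\,ds$ and $\nu(\delta) = \int_0^\delta s\, w_\delta(s)\,ds > 0$. -/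
/-!
Write `g = ρ - ρmin ≥ 0`; the claim is `∫ g g' 𝒟g ≥ 0`. After exchanging the integrals and
integrating by parts in `x` (periodicity kills the boundary terms and `∫ g² g' = 0`), the left side
becomes `-½ ∫₀^δ w(s) C'(s) ds`, where `C(s) = ∫₀¹ g(x)² g(x + s) dx`. By AM-GM and the translation
invariance of `∫₀¹ g³`, `C(s) ≤ C(0)`, and a second-mean-value argument for the nonnegative
nonincreasing weight `w` gives `∫₀^δ w C' ≤ w(δ) (C(δ) - C(0)) ≤ 0`.
-/

open Set intervalIntegral Function

theorem intervalIntegral_intervalIntegral_swap_of_continuousOn {F : ℝ → ℝ → ℝ} {a b c d : ℝ}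
    (hF : ContinuousOn F.uncurry (uIcc a b ×ˢ uIcc c d)) :
    ∫ x in a..b, ∫ y in c..d, F x y = ∫ y in c..d, ∫ x in a..b, F x y :=
  MeasureTheory.intervalIntegral_intervalIntegral_swap <|
    (hF.integrableOn_compact (isCompact_uIcc.prod isCompact_uIcc)).mono_set
      (prod_mono uIoc_subset_uIcc uIoc_subset_uIcc)

theorem continuous_intervalIntegral_mul_of_continuousOn {F : ℝ → ℝ → ℝ} {w : ℝ → ℝ} {a b : ℝ}
    (hab : a ≤ b) (hF : Continuous F.uncurry) (hw : ContinuousOn w (Icc a b)) :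
    Continuous fun x => ∫ s in a..b, F x s * w s := by
  set w' := IccExtend hab ((Icc a b).domRestrict w)
  have heq : ∀ x, ∫ s in a..b, F x s * w s = ∫ s in a..b, F x s * w' s := fun x =>
    integral_congr fun s hs => by
      rw [uIcc_of_le hab] at hs
      simp [w', IccExtend_of_mem hab _ hs]
  simp_rw [heq]
  have : Continuous w' := hw.domRestrict.Icc_extend'
  exact continuous_parametric_intervalIntegral_of_continuous' (by fun_prop) a b

theorem Function.Periodic.intervalIntegral_deriv_eq_zero {E : Type*} [NormedAddCommGroup E]
    [NormedSpace ℝ E] [CompleteSpace E] {f f' : ℝ → E} {T : ℝ} (hf : Periodic f T)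
    (hderiv : ∀ x, HasDerivAt f (f' x) x) (hint : IntervalIntegrable f' MeasureTheory.volume 0 T) :
    ∫ x in 0..T, f' x = 0 := by
  rw [integral_eq_sub_of_hasDerivAt (fun x _ => hderiv x) hint, sub_eq_zero]
  simpa using hf 0

theorem hasDerivAt_intervalIntegral_mul_comp_add {f g g' : ℝ → ℝ} (hf : Continuous f)
    (hg : ∀ x, HasDerivAt g (g' x) x) (hg' : Continuous g') (a b s : ℝ) :
    HasDerivAt (fun t => ∫ x in a..b, f x * g (x + t)) (∫ x in a..b, f x * g' (x + s)) s := by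
  have hgc : Continuous g := continuous_iff_continuousAt.2 fun x => (hg x).continuousAt
  have hprim : ∀ t, ∫ x in a..b, f x * g (x + t) =
      (∫ x in a..b, f x * g x) + ∫ u in 0..t, ∫ x in a..b, f x * g' (x + u) := by
    intro t
    have hftc : ∀ x, g (x + t) - g x = ∫ u in 0..t, g' (x + u) := fun x => by
      rw [integral_eq_sub_of_hasDerivAt (fun u _ => (hg (x + u)).comp_const_add x u)
        ((by fun_prop : Continuous _).intervalIntegrable _ _), add_zero]
    rw [← intervalIntegral_intervalIntegral_swap_of_continuousOn (by fun_prop),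
      ← sub_eq_iff_eq_add', ← integral_sub ((by fun_prop : Continuous _).intervalIntegrable _ _)
        ((by fun_prop : Continuous _).intervalIntegrable _ _)]
    refine integral_congr fun x _ => ?_
    rw [← mul_sub, hftc, integral_const_mul]
  have hcont : Continuous fun u => ∫ x in a..b, f x * g' (x + u) :=
    continuous_parametric_intervalIntegral_of_continuous' (by fun_prop) a b
  simp_rw [hprim]
  exact (integral_hasDerivAt_right (hcont.intervalIntegrable _ _)
    (hcont.stronglyMeasurableAtFilter _ _) hcont.continuousAt).const_add _

theorem Function.Periodic.intervalIntegral_sq_mul_comp_add_le {g : ℝ → ℝ} {T : ℝ}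
    (hg : Periodic g T) (hT : 0 ≤ T) (hgc : Continuous g) (hg0 : ∀ x, 0 ≤ g x) (s : ℝ) :
    ∫ x in 0..T, g x ^ 2 * g (x + s) ≤ ∫ x in 0..T, g x ^ 3 := by
  have hshift : ∫ x in 0..T, g (x + s) ^ 3 = ∫ x in 0..T, g x ^ 3 := by
    rw [integral_comp_add_right (fun y => g y ^ 3), zero_add, add_comm]
    simpa using (hg.comp fun y => y ^ 3).intervalIntegral_add_eq s 0
  have hamgm : ∀ x, g x ^ 2 * g (x + s) ≤ 2 / 3 * g x ^ 3 + 1 / 3 * g (x + s) ^ 3 := fun x => by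
    nlinarith [mul_nonneg (sq_nonneg (g x - g (x + s))) (by linarith [hg0 x, hg0 (x + s)] :
      0 ≤ 2 * g x + g (x + s))]
  calc ∫ x in 0..T, g x ^ 2 * g (x + s)
      ≤ ∫ x in 0..T, (2 / 3 * g x ^ 3 + 1 / 3 * g (x + s) ^ 3) :=
        integral_mono_on hT ((by fun_prop : Continuous _).intervalIntegrable _ _)
          ((by fun_prop : Continuous _).intervalIntegrable _ _) fun x _ => hamgm x
    _ = ∫ x in 0..T, g x ^ 3 := by
        rw [integral_add ((by fun_prop : Continuous _).intervalIntegrable _ _)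
          ((by fun_prop : Continuous _).intervalIntegrable _ _), integral_const_mul,
          integral_const_mul, hshift]
        ring

/-- Integrating by parts, `∫ w C' = w b (C b - C a) - ∫ w' (C - C a)` with `w' ≤ 0`. -/
theorem intervalIntegral_mul_deriv_nonpos_of_antitoneOn {w C C' : ℝ → ℝ} {a b : ℝ} (hab : a < b)
    (hw : ContDiffOn ℝ 1 w (Icc a b)) (hwb : 0 ≤ w b) (hmono : AntitoneOn w (Icc a b))
    (hC : ∀ s ∈ Icc a b, HasDerivAt C (C' s) s)
    (hC' : IntervalIntegrable C' MeasureTheory.volume a b) (hle : ∀ s ∈ Icc a b, C s ≤ C a) :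
    ∫ s in a..b, w s * C' s ≤ 0 := by
  set w' := derivWithin w (Icc a b)
  have hw' : ∀ s ∈ uIcc a b, HasDerivWithinAt w (w' s) (uIcc a b) s := fun s hs => by
    rw [uIcc_of_le hab.le] at hs ⊢
    exact ((hw.differentiableOn one_ne_zero) s hs).hasDerivWithinAt
  have hw'int : IntervalIntegrable w' MeasureTheory.volume a b :=
    (hw.continuousOn_derivWithin (uniqueDiffOn_Icc hab) le_rfl).intervalIntegrable_of_Icc hab.le
  have hCc : ContinuousOn C (Icc a b) := fun s hs => (hC s hs).continuousAt.continuousWithinAt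
  have hparts := integral_mul_deriv_eq_deriv_mul_of_hasDerivWithinAt hw'
    (fun s hs => (hC s (uIcc_of_le hab.le ▸ hs)).hasDerivWithinAt) hw'int hC'
  have hw'C : ∫ s in a..b, w' s * C a ≤ ∫ s in a..b, w' s * C s :=
    integral_mono_on hab.le (hw'int.mul_const _)
      (hw'int.mul_continuousOn (uIcc_of_le hab.le ▸ hCc))
      fun s hs => mul_le_mul_of_nonpos_left (hle s hs) hmono.derivWithin_nonpos
  rw [integral_mul_const, integral_derivWithin_Icc_of_contDiffOn_Icc hw hab.le] at hw'C
  linarith [mul_nonneg hwb (sub_nonneg.2 (hle b ⟨hab.le, le_rfl⟩))]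

/-- `ν(δ) 𝒟_x^δ g = nonlocalDiff w δ g x`. -/
noncomputable def nonlocalDiff (w : ℝ → ℝ) (δ : ℝ) (g : ℝ → ℝ) (x : ℝ) : ℝ :=
  ∫ s in 0..δ, (g (x + s) - g x) * w s

theorem nonlocalDiff_sub_const (w : ℝ → ℝ) (δ : ℝ) (g : ℝ → ℝ) (c : ℝ) :
    nonlocalDiff w δ (fun x => g x - c) = nonlocalDiff w δ g := by
  ext x
  simp only [nonlocalDiff, sub_sub_sub_cancel_right]

theorem continuous_nonlocalDiff {w g : ℝ → ℝ} {δ : ℝ} (hδ : 0 ≤ δ) (hw : ContinuousOn w (Icc 0 δ))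
    (hg : Continuous g) : Continuous (nonlocalDiff w δ g) :=
  continuous_intervalIntegral_mul_of_continuousOn hδ (by fun_prop) hw

theorem Function.Periodic.intervalIntegral_mul_deriv_mul_nonlocalDiff_nonneg {g g' w : ℝ → ℝ}
    {T δ : ℝ} (hper : Periodic g T) (hT : 0 ≤ T) (hδ : 0 < δ) (hg : ∀ x, HasDerivAt g (g' x) x)
    (hg' : Continuous g') (hg0 : ∀ x, 0 ≤ g x) (hw : ContDiffOn ℝ 1 w (Icc 0 δ))
    (hwδ : 0 ≤ w δ) (hmono : AntitoneOn w (Icc 0 δ)) :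
    0 ≤ ∫ x in 0..T, g x * g' x * nonlocalDiff w δ g x := by
  have hgc : Continuous g := continuous_iff_continuousAt.2 fun x => (hg x).continuousAt
  set C := fun s => ∫ x in 0..T, g x ^ 2 * g (x + s)
  set E := fun s => ∫ x in 0..T, g x ^ 2 * g' (x + s)
  have hC : ∀ s, HasDerivAt C (E s) s :=
    hasDerivAt_intervalIntegral_mul_comp_add (by fun_prop) hg hg' 0 T
  have hE : Continuous E := continuous_parametric_intervalIntegral_of_continuous' (by fun_prop) 0 T
  have hCle : ∀ s, C s ≤ C 0 := fun s => by
    simpa [C, ← pow_succ] using hper.intervalIntegral_sq_mul_comp_add_le hT hgc hg0 s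
  have hE0 : ∫ x in 0..T, g x ^ 2 * g' x = 0 := by
    refine (hper.comp fun y => y ^ 3 / 3).intervalIntegral_deriv_eq_zero (fun x => ?_)
      ((by fun_prop : Continuous _).intervalIntegrable _ _)
    exact (((hg x).pow 3).div_const 3).congr_deriv (by push_cast; ring)
  have hcorr : ∀ s, ∫ x in 0..T, g x * g' x * (g (x + s) - g x) = -(1 / 2) * E s := by
    intro s
    have hper' : Periodic (fun x => g x ^ 2 * g (x + s)) T := fun x => by
      simp only [hper x, add_right_comm x T s, hper (x + s)]
    have h0 := hper'.intervalIntegral_deriv_eq_zero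
      (f' := fun x => 2 * (g x * g' x * g (x + s)) + g x ^ 2 * g' (x + s))
      (fun x => (((hg x).fun_pow 2).mul ((hg (x + s)).comp_add_const x s)).congr_deriv
        (by push_cast; ring)) ((by fun_prop : Continuous _).intervalIntegrable _ _)
    rw [integral_add ((by fun_prop : Continuous _).intervalIntegrable _ _)
      ((by fun_prop : Continuous _).intervalIntegrable _ _), integral_const_mul] at h0
    have hsplit : (fun x => g x * g' x * (g (x + s) - g x)) =
        fun x => g x * g' x * g (x + s) - g x ^ 2 * g' x := by
      ext x; ring
    rw [hsplit, integral_sub ((by fun_prop : Continuous _).intervalIntegrable _ _)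
      ((by fun_prop : Continuous _).intervalIntegrable _ _), hE0]
    linarith
  have hswap : ∫ x in 0..T, g x * g' x * nonlocalDiff w δ g x =
      ∫ s in 0..δ, w s * ∫ x in 0..T, g x * g' x * (g (x + s) - g x) := by
    have hws : ContinuousOn (fun p : ℝ × ℝ => w p.2) (uIcc 0 T ×ˢ uIcc 0 δ) :=
      hw.continuousOn.comp continuousOn_snd fun p hp => uIcc_of_le hδ.le ▸ hp.2
    have hcont : ContinuousOn (uncurry fun x s => g x * g' x * ((g (x + s) - g x) * w s))
        (uIcc 0 T ×ˢ uIcc 0 δ) :=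
      (by fun_prop : Continuous _).continuousOn.mul
        ((by fun_prop : Continuous _).continuousOn.mul hws)
    simp_rw [nonlocalDiff, ← integral_const_mul]
    rw [intervalIntegral_intervalIntegral_swap_of_continuousOn hcont]
    refine integral_congr fun s _ => integral_congr fun x _ => ?_
    ring
  rw [hswap]
  simp_rw [hcorr, mul_left_comm _ (-(1 / 2) : ℝ), integral_const_mul]
  have := intervalIntegral_mul_deriv_nonpos_of_antitoneOn hδ hw hwδ hmono (fun s _ => hC s)
    (hE.intervalIntegrable _ _) fun s _ => hCle s
  linarith

theorem stmt11_general (δ : ℝ) (hδ : 0 < δ) (w : ℝ → ℝ)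
    (hw : ContDiffOn ℝ 1 w (Icc 0 δ))
    (hpos : ∀ s ∈ Icc 0 δ, 0 ≤ w s)
    (hmono : AntitoneOn w (Icc 0 δ))
    (ν : ℝ) (hνpos : 0 < ν)
    (ρ : ℝ → ℝ) (hρ : ContDiff ℝ 1 ρ) (hper : Function.Periodic ρ 1)
    (ρmin : ℝ) (hlow : ∀ x, ρmin ≤ ρ x) :
    ρmin * ∫ x in (0:ℝ)..1, deriv ρ x * ((1 / ν) * ∫ s in (0:ℝ)..δ, (ρ (x + s) - ρ x) * w s) ≤
      ∫ x in (0:ℝ)..1, ρ x * deriv ρ x * ((1 / ν) * ∫ s in (0:ℝ)..δ, (ρ (x + s) - ρ x) * w s) := by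
  change ρmin * ∫ x in (0:ℝ)..1, deriv ρ x * (1 / ν * nonlocalDiff w δ ρ x) ≤
    ∫ x in (0:ℝ)..1, ρ x * deriv ρ x * (1 / ν * nonlocalDiff w δ ρ x)
  have hρ' : Continuous (deriv ρ) := hρ.continuous_deriv le_rfl
  have hD : Continuous (nonlocalDiff w δ ρ) :=
    continuous_nonlocalDiff hδ.le hw.continuousOn hρ.continuous
  have hT := (show Periodic (fun x => ρ x - ρmin) 1 from fun x => by simp [hper x])
    |>.intervalIntegral_mul_deriv_mul_nonlocalDiff_nonneg zero_le_one hδ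
      (fun x => (hρ.differentiable one_ne_zero x).hasDerivAt.sub_const ρmin) hρ'
      (fun x => sub_nonneg.2 (hlow x)) hw (hpos δ ⟨hδ.le, le_rfl⟩) hmono
  rw [nonlocalDiff_sub_const] at hT
  have hdiff : ∫ x in (0:ℝ)..1, (ρ x * deriv ρ x * (1 / ν * nonlocalDiff w δ ρ x) -
      ρmin * (deriv ρ x * (1 / ν * nonlocalDiff w δ ρ x))) =
      1 / ν * ∫ x in (0:ℝ)..1, (ρ x - ρmin) * deriv ρ x * nonlocalDiff w δ ρ x := by
    rw [← integral_const_mul]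
    exact integral_congr fun x _ => by ring
  rw [← sub_nonneg, ← integral_const_mul, ← integral_sub
    ((by fun_prop : Continuous _).intervalIntegrable _ _)
    ((by fun_prop : Continuous _).intervalIntegrable _ _), hdiff]
  exact mul_nonneg (one_div_nonneg.2 hνpos.le) hT

theorem stmt11 (δ : ℝ) (hδ : 0 < δ) (hδ1 : δ ≤ 1) (w : ℝ → ℝ)
    (hw : ContDiffOn ℝ 1 w (Icc 0 δ))
    (hpos : ∀ s ∈ Icc 0 δ, 0 ≤ w s)
    (hmono : AntitoneOn w (Icc 0 δ))
    (hnorm : (∫ s in (0:ℝ)..δ, w s) = 1)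
    (ν : ℝ) (hν : ν = ∫ s in (0:ℝ)..δ, s * w s) (hνpos : 0 < ν)
    (ρ : ℝ → ℝ) (hρ : ContDiff ℝ 1 ρ) (hper : Function.Periodic ρ 1)
    (ρmin : ℝ) (hρmin : 0 ≤ ρmin) (hlow : ∀ x, ρmin ≤ ρ x) :
    ρmin * ∫ x in (0:ℝ)..1, deriv ρ x * ((1 / ν) * ∫ s in (0:ℝ)..δ, (ρ (x + s) - ρ x) * w s) ≤
      ∫ x in (0:ℝ)..1, ρ x * deriv ρ x * ((1 / ν) * ∫ s in (0:ℝ)..δ, (ρ (x + s) - ρ x) * w s) :=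
  stmt11_general δ hδ w hw hpos hmono ν hνpos ρ hρ hper ρmin hlow
end

section
/- Local reduction for the triangular kernel: let $\delta = 1$ and $w_\delta(s) = 2(1-s)$ on $[0,1]$. For any $\mathbf{C}^1$ 1-periodic function $\rho$ with mean $\bar\rho$, the nonlocal gradient $\mathcal{D}_x^\delta\rho(x) = 6\int_0^1 (1-s)[\rho(x+s) - \rho(x)]\,ds$ satisfies $\partial_x \mathcal{D}_x^\delta\rho(x) = -6(\rho(x) - \bar\rho) - 3\rho'(x)$, and consequently $\int_0^1 \rho'(x)\, \mathcal{D}_x^\delta\rho(x)\,dx = 6\int_0^1 (\rho(x) - \bar\rho)^2\,dx$. -/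
open Real Set MeasureTheory intervalIntegral

/-!
Substituting `u = x + s`, `∫₀¹ (1 - s) ρ(x + s) ds = (1 + x) ρ̄ - ∫ₓˣ⁺¹ u ρ(u) du`, whose
derivative is `ρ̄ - ((x + 1) ρ(x + 1) - x ρ(x)) = ρ̄ - ρ(x)` by periodicity; with the local term
`-ρ(x) ∫₀¹ (1 - s) ds = -ρ(x)/2` this gives `D'`. The energy identity is integration by parts
against `ρ - ρ̄`, whose derivative is `ρ'`: the boundary terms cancel by periodicity of `ρ` and
`D`, and the cross term `∫ (ρ - ρ̄) ρ'` vanishes by the same integration by parts.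
-/

theorem Continuous.hasDerivAt_integral_add_const {E : Type*} [NormedAddCommGroup E]
    [NormedSpace ℝ E] [CompleteSpace E] {f : ℝ → E} (hf : Continuous f) (c x : ℝ) :
    HasDerivAt (fun y => ∫ u in y..y + c, f u) (f (x + c) - f x) x := by
  have hsplit : (fun y => ∫ u in y..y + c, f u)
      = fun y => (∫ u in (0:ℝ)..y + c, f u) - ∫ u in (0:ℝ)..y, f u :=
    funext fun y => (integral_interval_sub_left (hf.intervalIntegrable _ _)
      (hf.intervalIntegrable _ _)).symm
  rw [hsplit]
  exact ((hf.integral_hasStrictDerivAt 0 (x + c)).hasDerivAt.comp_add_const x c).sub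
    (hf.integral_hasStrictDerivAt 0 x).hasDerivAt

theorem intervalIntegral.integral_deriv_mul_eq_neg_integral_mul_deriv {u v u' v' : ℝ → ℝ}
    {a b : ℝ} (hu : ∀ x ∈ uIcc a b, HasDerivAt u (u' x) x)
    (hv : ∀ x ∈ uIcc a b, HasDerivAt v (v' x) x) (hu' : IntervalIntegrable u' volume a b)
    (hv' : IntervalIntegrable v' volume a b) (hua : u a = u b) (hva : v a = v b) :
    ∫ x in a..b, u' x * v x = -∫ x in a..b, u x * v' x := by
  rw [integral_mul_deriv_eq_deriv_mul hu hv hu' hv', hua, hva]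
  ring

theorem intervalIntegral.integral_mul_deriv_eq_zero_of_eq {u u' : ℝ → ℝ} {a b : ℝ}
    (hu : ∀ x ∈ uIcc a b, HasDerivAt u (u' x) x) (hu' : IntervalIntegrable u' volume a b)
    (hua : u a = u b) : ∫ x in a..b, u x * u' x = 0 := by
  have h := integral_deriv_mul_eq_neg_integral_mul_deriv hu hu hu' hu' hua hua
  simp only [mul_comm (u' _)] at h
  linarith

namespace Function.Periodic

variable {ρ : ℝ → ℝ} {T : ℝ}

theorem integral_sub_mul_comp_add (hρ : Continuous ρ) (hper : Periodic ρ T) (x : ℝ) :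
    ∫ s in (0:ℝ)..T, (T - s) * ρ (x + s)
      = (T + x) * (∫ u in (0:ℝ)..T, ρ u) - ∫ u in x..x + T, u * ρ u := by
  have hshift : ∫ s in (0:ℝ)..T, (T - s) * ρ (x + s) = ∫ u in x..x + T, (T + x - u) * ρ u := by
    have h := integral_comp_add_left (fun u => (T + x - u) * ρ u) x (a := 0) (b := T)
    rw [add_zero] at h
    rw [← h]
    congr 1; funext s; ring
  have hmean : ∫ u in x..x + T, ρ u = ∫ u in (0:ℝ)..T, ρ u := by
    simpa only [zero_add] using hper.intervalIntegral_add_eq x 0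
  rw [hshift, ← hmean, ← intervalIntegral.integral_const_mul, ← intervalIntegral.integral_sub]
  · congr 1; funext u; ring
  · exact (continuous_const.mul hρ).intervalIntegrable _ _
  · exact (continuous_id.mul hρ).intervalIntegrable _ _

theorem hasDerivAt_integral_sub_mul_comp_add (hρ : Continuous ρ) (hper : Periodic ρ T) (x : ℝ) :
    HasDerivAt (fun x => ∫ s in (0:ℝ)..T, (T - s) * ρ (x + s))
      ((∫ u in (0:ℝ)..T, ρ u) - T * ρ x) x := by
  set M := ∫ u in (0:ℝ)..T, ρ u
  have hlin : HasDerivAt (fun y => (T + y) * M) M x := by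
    simpa using ((hasDerivAt_id x).const_add T).mul_const M
  have hcont : Continuous fun u => u * ρ u := continuous_id.mul hρ
  rw [funext (integral_sub_mul_comp_add hρ hper)]
  refine (hlin.fun_sub (hcont.hasDerivAt_integral_add_const T x)).congr_deriv ?_
  rw [hper x]
  ring

theorem hasDerivAt_integral_sub_mul_sub_comp_add (hρ : Continuous ρ) (hper : Periodic ρ T)
    {ρ' x : ℝ} (hρx : HasDerivAt ρ ρ' x) :
    HasDerivAt (fun x => ∫ s in (0:ℝ)..T, (T - s) * (ρ (x + s) - ρ x))
      ((∫ u in (0:ℝ)..T, ρ u) - T * ρ x - T ^ 2 / 2 * ρ') x := by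
  have hsplit : ∀ y, ∫ s in (0:ℝ)..T, (T - s) * (ρ (y + s) - ρ y)
      = (∫ s in (0:ℝ)..T, (T - s) * ρ (y + s)) - T ^ 2 / 2 * ρ y := by
    intro y
    simp_rw [mul_sub]
    rw [intervalIntegral.integral_sub, intervalIntegral.integral_mul_const,
      intervalIntegral.integral_sub intervalIntegrable_const intervalIntegrable_id]
    · rw [intervalIntegral.integral_const, integral_id, smul_eq_mul]
      ring
    · exact ((continuous_const.sub continuous_id).mul
        (hρ.comp (continuous_const_add y))).intervalIntegrable _ _
    · exact ((continuous_const.sub continuous_id).mul continuous_const).intervalIntegrable _ _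
  rw [funext hsplit]
  exact (hasDerivAt_integral_sub_mul_comp_add hρ hper x).fun_sub (hρx.const_mul _)

end Function.Periodic

theorem stmt16 (ρ : ℝ → ℝ) (hρ : ContDiff ℝ 1 ρ) (hper : Function.Periodic ρ 1)
    (ρbar : ℝ) (hbar : ρbar = ∫ x in (0:ℝ)..1, ρ x)
    (D : ℝ → ℝ) (hD : ∀ x, D x = 6 * ∫ s in (0:ℝ)..1, (1 - s) * (ρ (x + s) - ρ x)) :
    (∀ x, deriv D x = -6 * (ρ x - ρbar) - 3 * deriv ρ x) ∧
    (∫ x in (0:ℝ)..1, deriv ρ x * D x) = 6 * ∫ x in (0:ℝ)..1, (ρ x - ρbar)^2 := by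
  have hρd : ∀ x, HasDerivAt ρ (deriv ρ x) x := fun x =>
    (hρ.differentiable one_ne_zero x).hasDerivAt
  have hρ'c : Continuous (deriv ρ) := hρ.continuous_deriv le_rfl
  have hDd : ∀ x, HasDerivAt D (-6 * (ρ x - ρbar) - 3 * deriv ρ x) x := fun x => by
    rw [funext hD]
    refine ((hper.hasDerivAt_integral_sub_mul_sub_comp_add hρ.continuous (hρd x)).const_mul 6)
      |>.congr_deriv ?_
    rw [hbar]; ring
  refine ⟨fun x => (hDd x).deriv, ?_⟩
  set g := fun x => ρ x - ρbar
  have hgd : ∀ x, HasDerivAt g (deriv ρ x) x := fun x => (hρd x).sub_const ρbar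
  have h10 : ρ 1 = ρ 0 := by simpa using hper 0
  have hg : g 0 = g 1 := by simp only [g, h10]
  have hDper : D 0 = D 1 := by simp only [hD, zero_add, h10, add_comm (1:ℝ), hper _]
  have hgc : Continuous g := hρ.continuous.sub continuous_const
  have hD'c : Continuous fun x => -6 * g x - 3 * deriv ρ x := by fun_prop
  calc ∫ x in (0:ℝ)..1, deriv ρ x * D x
      = -∫ x in (0:ℝ)..1, g x * (-6 * g x - 3 * deriv ρ x) :=
        integral_deriv_mul_eq_neg_integral_mul_deriv (fun x _ => hgd x) (fun x _ => hDd x)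
          (hρ'c.intervalIntegrable _ _) (hD'c.intervalIntegrable _ _) hg hDper
    _ = 6 * (∫ x in (0:ℝ)..1, g x ^ 2) + 3 * ∫ x in (0:ℝ)..1, g x * deriv ρ x := by
        rw [← intervalIntegral.integral_const_mul, ← intervalIntegral.integral_const_mul,
          ← intervalIntegral.integral_add, ← intervalIntegral.integral_neg]
        · congr 1; funext x; ring
        all_goals exact (by fun_prop : Continuous _).intervalIntegrable _ _
    _ = 6 * ∫ x in (0:ℝ)..1, (ρ x - ρbar) ^ 2 := by
        rw [integral_mul_deriv_eq_zero_of_eq (fun x _ => hgd x) (hρ'c.intervalIntegrable _ _) hg]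
        ring
end

section
/- Counterexample with the constant kernel: let $\delta = 1/m$ for a positive integer $m$, $w_\delta(s) = 1/\delta$ on $[0,\delta]$, and let $\rho_0 : \mathbb{R} \to \mathbb{R}$ be a $\mathbf{C}^1$ function that is periodic with period $\delta$ and has mean $\bar\rho = \delta^{-1}\int_0^\delta \rho_0$. Then $\rho(x,t) = \rho_0(x - (1-\bar\rho)t)$ is an exact solution of the nonlocal LWR equation $\partial_t \rho + \partial_x\Big(\rho\,\big(1 - \int_0^\delta \rho(x+s,t)\, w_\delta(s)\,ds\big)\Big) = 0$; in particular the nonlocal velocity $u(x,t) = 1 - \frac{1}{\delta}\int_0^\delta \rho(x+s,t)\,ds$ is identically equal to $1 - \bar\rho$. -/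
open Real Set MeasureTheory intervalIntegral

/-
Translating a `δ`-periodic profile does not change its average over a window of length `δ`,
so for the traveling wave `ρ₀ (x - c t)` the nonlocal velocity is the constant `1 - ρbar`.
The flux is then `c ρ` with `c = 1 - ρbar`, and the equation reduces to the transport equation
`∂ₜρ + c ∂ₓρ = 0`, which the traveling wave solves.
-/

theorem Function.Periodic.intervalIntegral_comp_add_left_eq {E : Type*} [NormedAddCommGroup E]
    [NormedSpace ℝ E] {f : ℝ → E} {T : ℝ} (hf : Function.Periodic f T) (a : ℝ) :
    ∫ s in (0:ℝ)..T, f (a + s) = ∫ s in (0:ℝ)..T, f s := by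
  rw [intervalIntegral.integral_comp_add_left f a]
  simpa using hf.intervalIntegral_add_eq a 0

theorem deriv_comp_const_sub_mul {E : Type*} [NormedAddCommGroup E] [NormedSpace ℝ E]
    {f : ℝ → E} {x c t : ℝ} (hf : DifferentiableAt ℝ f (x - c * t)) :
    deriv (fun τ => f (x - c * τ)) t = -c • deriv f (x - c * t) := by
  have hlin : HasDerivAt (fun τ : ℝ => x - c * τ) (-c) t := by
    simpa using ((hasDerivAt_id t).const_mul c).const_sub x
  exact (hf.hasDerivAt.scomp t hlin).deriv

theorem stmt17_general (δ : ℝ)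
    (ρ₀ : ℝ → ℝ) (hρ₀ : ContDiff ℝ 1 ρ₀) (hper : Function.Periodic ρ₀ δ)
    (ρbar : ℝ) (hbar : ρbar = (1 / δ) * ∫ s in (0:ℝ)..δ, ρ₀ s)
    (ρ : ℝ → ℝ → ℝ) (hρ : ∀ x t, ρ x t = ρ₀ (x - (1 - ρbar) * t)) :
    (∀ x t : ℝ, 1 - (1 / δ) * ∫ s in (0:ℝ)..δ, ρ (x + s) t = 1 - ρbar) ∧
    (∀ x t : ℝ,
      deriv (fun τ => ρ x τ) t +
        deriv (fun y => ρ y t * (1 - (1 / δ) * ∫ s in (0:ℝ)..δ, ρ (y + s) t)) x = 0) := by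
  set c := 1 - ρbar
  have hmean : ∀ x t, (1 / δ) * ∫ s in (0:ℝ)..δ, ρ (x + s) t = ρbar := fun x t => by
    simp_rw [hρ, add_sub_right_comm x, hper.intervalIntegral_comp_add_left_eq, hbar]
  refine ⟨fun x t => by rw [hmean], fun x t => ?_⟩
  have hflux : (fun y => ρ y t * (1 - (1 / δ) * ∫ s in (0:ℝ)..δ, ρ (y + s) t))
      = fun y => c * ρ₀ (y - c * t) := by
    funext y; rw [hρ, hmean, mul_comm]
  have hdiff : DifferentiableAt ℝ ρ₀ (x - c * t) := hρ₀.differentiable one_ne_zero _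
  simp_rw [hflux, hρ, deriv_comp_const_sub_mul hdiff, deriv_const_mul_field', deriv_comp_sub_const,
    smul_eq_mul]
  ring

theorem stmt17 (m : ℕ) (hm : 0 < m) (δ : ℝ) (hδ : δ = 1 / m)
    (ρ₀ : ℝ → ℝ) (hρ₀ : ContDiff ℝ 1 ρ₀) (hper : Function.Periodic ρ₀ δ)
    (ρbar : ℝ) (hbar : ρbar = (1 / δ) * ∫ s in (0:ℝ)..δ, ρ₀ s)
    (ρ : ℝ → ℝ → ℝ) (hρ : ∀ x t, ρ x t = ρ₀ (x - (1 - ρbar) * t)) :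
    (∀ x t : ℝ, 1 - (1 / δ) * ∫ s in (0:ℝ)..δ, ρ (x + s) t = 1 - ρbar) ∧
    (∀ x t : ℝ,
      deriv (fun τ => ρ x τ) t +
        deriv (fun y => ρ y t * (1 - (1 / δ) * ∫ s in (0:ℝ)..δ, ρ (y + s) t)) x = 0) :=
  stmt17_general δ ρ₀ hρ₀ hper ρbar hbar ρ hρ
end
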